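/- If G is a connected graph of order n containing a vertex of degree n−1, then edim(G) ≥ n−2 (so edim(G) is n−1 or n−2). -/
import Mathlib


open SimpleGraph

/-- Distance from a vertex `v` to an edge `e = uw`: `min (d v u) (d v w)`. -/
noncomputable def edgeDist {V : Type*} (G : SimpleGraph V) (v : V) (e : Sym2 V) : ℕ :=
  Sym2.lift ⟨fun u w => min (G.dist v u) (G.dist v w), fun u w => by simp [min_comm]⟩ e

/-- `S` is an edge metric generator: every two distinct edges are distinguished
by some vertex of `S`. -/
def IsEdgeMetricGenerator {V : Type*} (G : SimpleGraph V) (S : Set V) : Prop :=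
  ∀ e₁ ∈ G.edgeSet, ∀ e₂ ∈ G.edgeSet, e₁ ≠ e₂ →
    ∃ v ∈ S, edgeDist G v e₁ ≠ edgeDist G v e₂

/-- The edge metric dimension: minimum cardinality of an edge metric generator. -/
noncomputable def edim {V : Type*} (G : SimpleGraph V) : ℕ :=
  sInf {k | ∃ S : Finset V, S.card = k ∧ IsEdgeMetricGenerator G ↑S}

lemma edgeDist_mk {V : Type*} (G : SimpleGraph V) (v a b : V) :
    edgeDist G v s(a, b) = min (G.dist v a) (G.dist v b) := rfl

lemma univ_gen {V : Type*} [Fintype V] (G : SimpleGraph V) (hG : G.Connected) :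
    IsEdgeMetricGenerator G (↑(Finset.univ : Finset V)) := by
  intro e₁ he₁ e₂ he₂ hne
  induction e₁ using Sym2.ind with
  | _ a b =>
  induction e₂ using Sym2.ind with
  | _ c d =>
  rw [mem_edgeSet] at he₁ he₂
  -- some endpoint of e₁ is not an endpoint of e₂
  have key : ∀ u : V, u ≠ c → u ≠ d →
      ∃ w ∈ (Finset.univ : Finset V), edgeDist G w s(a,b) ≠ edgeDist G w s(c,d) →
      True := fun _ _ _ => ⟨a, by simp⟩
  have hab := he₁.ne
  by_cases hac : a = c
  · -- then b ∉ {c, d} since edges distinct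
    have hbc : b ≠ c := fun hh => hab (hh ▸ hac ▸ rfl)
    have hbd : b ≠ d := by
      intro hh
      apply hne
      rw [hac, hh]
    refine ⟨b, by simp, ?_⟩
    rw [edgeDist_mk, edgeDist_mk]
    have h1 : G.dist b b = 0 := by simp
    have h2 : 0 < G.dist b c := hG.pos_dist_of_ne hbc
    have h3 : 0 < G.dist b d := hG.pos_dist_of_ne hbd
    omega
  · by_cases had : a = d
    · have hbd : b ≠ d := fun hh => hab (hh ▸ had ▸ rfl)
      have hbc : b ≠ c := by
        intro hh
        apply hne
        rw [had, hh, Sym2.eq_swap]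
      refine ⟨b, by simp, ?_⟩
      rw [edgeDist_mk, edgeDist_mk]
      have h1 : G.dist b b = 0 := by simp
      have h2 : 0 < G.dist b c := hG.pos_dist_of_ne hbc
      have h3 : 0 < G.dist b d := hG.pos_dist_of_ne hbd
      omega
    · refine ⟨a, by simp, ?_⟩
      rw [edgeDist_mk, edgeDist_mk]
      have h1 : G.dist a a = 0 := by simp
      have h2 : 0 < G.dist a c := hG.pos_dist_of_ne hac
      have h3 : 0 < G.dist a d := hG.pos_dist_of_ne had
      omega

theorem edim_ge_of_universal_vertex {V : Type*} [Fintype V] (G : SimpleGraph V)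
    [DecidableRel G.Adj] (hG : G.Connected)
    (h : ∃ v : V, G.degree v = Fintype.card V - 1) :
    Fintype.card V - 2 ≤ edim G := by
  classical
  obtain ⟨v, hv⟩ := h
  have hadj : ∀ u : V, u ≠ v → G.Adj v u := by
    have hsub : G.neighborFinset v ⊆ Finset.univ.erase v := by
      intro u hu
      rw [mem_neighborFinset] at hu
      exact Finset.mem_erase.mpr ⟨hu.ne', Finset.mem_univ u⟩
    have hcard : (Finset.univ.erase v).card ≤ (G.neighborFinset v).card := by
      rw [Finset.card_erase_of_mem (Finset.mem_univ v), Finset.card_univ,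
        ← card_neighborFinset_eq_degree] at *
      omega
    have heq := Finset.eq_of_subset_of_card_le hsub hcard
    intro u hu
    have : u ∈ G.neighborFinset v := by
      rw [heq]; exact Finset.mem_erase.mpr ⟨hu, Finset.mem_univ u⟩
    rwa [mem_neighborFinset] at this
  refine le_csInf ⟨Finset.univ.card, Finset.univ, rfl, univ_gen G hG⟩ ?_
  rintro k ⟨S, rfl, hS⟩
  by_contra hlt
  push_neg at hlt
  have hn3 : 3 ≤ Fintype.card V := by omega
  have hTcard : 2 ≤ ((Finset.univ.erase v) \ S).card := by
    have h1 : (Finset.univ.erase v).card = Fintype.card V - 1 := by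
      rw [Finset.card_erase_of_mem (Finset.mem_univ v), Finset.card_univ]
    have h2 := Finset.le_card_sdiff S (Finset.univ.erase v)
    omega
  obtain ⟨x, hx, y, hy, hxy⟩ := Finset.one_lt_card.mp hTcard
  have hxv : x ≠ v := (Finset.mem_erase.mp (Finset.mem_sdiff.mp hx).1).1
  have hyv : y ≠ v := (Finset.mem_erase.mp (Finset.mem_sdiff.mp hy).1).1
  have hxS : x ∉ S := (Finset.mem_sdiff.mp hx).2
  have hyS : y ∉ S := (Finset.mem_sdiff.mp hy).2
  have hex : s(v, x) ∈ G.edgeSet := G.mem_edgeSet.mpr (hadj x hxv)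
  have hey : s(v, y) ∈ G.edgeSet := G.mem_edgeSet.mpr (hadj y hyv)
  have hne : s(v, x) ≠ s(v, y) := fun hh => hxy (Sym2.congr_right.mp hh)
  obtain ⟨w, hwS, hw⟩ := hS _ hex _ hey hne
  rw [Finset.mem_coe] at hwS
  apply hw
  rw [edgeDist_mk, edgeDist_mk]
  by_cases hwv : w = v
  · subst hwv
    have hd : G.dist w w = 0 := by simp
    rw [hd]
    simp
  · have h1 : G.dist w v = 1 := dist_eq_one_iff_adj.mpr (hadj w hwv).symm
    have h2 : 0 < G.dist w x := hG.pos_dist_of_ne (fun hh => hxS (hh ▸ hwS))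
    have h3 : 0 < G.dist w y := hG.pos_dist_of_ne (fun hh => hyS (hh ▸ hwS))
    omega
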